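/- Let n ≥ 2, d ≥ 1 and let ρ : sVV_n → Mat_d(ℂ) be a calibrated representation. If every diagonal entry of ρ(y_1) is an integer, then for every j = 1,…,n every diagonal entry of ρ(y_j) is an integer. -/

import Mathlib

/-!
Induct on `j`. In a basis diagonalising `y_i` and `y_{i+1}`, the relations `s_i² = 1`,
`s_i y_i - y_{i+1} s_i = -e_i - 1` and `(y_i - y_{i+1}) e_i = e_i` read entrywise force every
eigenvalue of `y_{i+1}` to lie within `1` of some eigenvalue of `y_i`: a nonzero row of `e_i`
gives the shift `-1`, and otherwise either the eigenvalue already occurs for `y_i` or the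
corresponding row of `s_i` is `± 1` on the diagonal.
-/

noncomputable section

namespace Periplectic

/-- Generators of the degenerate affine periplectic Brauer algebra on `n` strands:
`S i` for `1 ≤ i ≤ n-1`, `E i` for `1 ≤ i ≤ n-1`, `Y j` for `1 ≤ j ≤ n`. -/
inductive Gen (n : ℕ) : Type
  | S (i : ℕ) (h : 1 ≤ i ∧ i ≤ n - 1) : Gen n
  | E (i : ℕ) (h : 1 ≤ i ∧ i ≤ n - 1) : Gen n
  | Y (j : ℕ) (h : 1 ≤ j ∧ j ≤ n) : Gen n

/-- The free `ℂ`-algebra on the generators. -/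
abbrev FA (n : ℕ) : Type := FreeAlgebra ℂ (Gen n)

def fS (n i : ℕ) (h : 1 ≤ i ∧ i ≤ n - 1) : FA n := FreeAlgebra.ι ℂ (Gen.S i h)
def fE (n i : ℕ) (h : 1 ≤ i ∧ i ≤ n - 1) : FA n := FreeAlgebra.ι ℂ (Gen.E i h)
def fY (n j : ℕ) (h : 1 ≤ j ∧ j ≤ n) : FA n := FreeAlgebra.ι ℂ (Gen.Y j h)

/-- The defining relations of the degenerate affine periplectic Brauer algebra. -/
inductive Rel (n : ℕ) : FA n → FA n → Prop
  /- (VV1)  s_i² = 1 -/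
  | s_sq (i : ℕ) (h : 1 ≤ i ∧ i ≤ n - 1) :
      Rel n (fS n i h * fS n i h) 1
  /- (VV2)(i)  s_i e_j = e_j s_i for |i-j| > 1 -/
  | se_comm (i j : ℕ) (hi : 1 ≤ i ∧ i ≤ n - 1) (hj : 1 ≤ j ∧ j ≤ n - 1)
      (hij : i + 1 < j ∨ j + 1 < i) :
      Rel n (fS n i hi * fE n j hj) (fE n j hj * fS n i hi)
  /- (VV2)(ii)  e_i e_j = e_j e_i for |i-j| > 1 -/
  | ee_comm (i j : ℕ) (hi : 1 ≤ i ∧ i ≤ n - 1) (hj : 1 ≤ j ∧ j ≤ n - 1)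
      (hij : i + 1 < j ∨ j + 1 < i) :
      Rel n (fE n i hi * fE n j hj) (fE n j hj * fE n i hi)
  /- (VV2)(iii)  e_i y_j = y_j e_i for j ∉ {i, i+1} -/
  | ey_comm (i j : ℕ) (hi : 1 ≤ i ∧ i ≤ n - 1) (hj : 1 ≤ j ∧ j ≤ n)
      (hij : j ≠ i ∧ j ≠ i + 1) :
      Rel n (fE n i hi * fY n j hj) (fY n j hj * fE n i hi)
  /- (VV2)(iv)  y_i y_j = y_j y_i -/
  | yy_comm (i j : ℕ) (hi : 1 ≤ i ∧ i ≤ n) (hj : 1 ≤ j ∧ j ≤ n) :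
      Rel n (fY n i hi * fY n j hj) (fY n j hj * fY n i hi)
  /- (VV3)(i)  s_i s_j = s_j s_i for |i-j| > 1 -/
  | ss_comm (i j : ℕ) (hi : 1 ≤ i ∧ i ≤ n - 1) (hj : 1 ≤ j ∧ j ≤ n - 1)
      (hij : i + 1 < j ∨ j + 1 < i) :
      Rel n (fS n i hi * fS n j hj) (fS n j hj * fS n i hi)
  /- (VV3)(ii)  braid relation -/
  | braid (i : ℕ) (hi : 1 ≤ i ∧ i ≤ n - 1) (hi1 : 1 ≤ i + 1 ∧ i + 1 ≤ n - 1) :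
      Rel n (fS n i hi * fS n (i+1) hi1 * fS n i hi)
            (fS n (i+1) hi1 * fS n i hi * fS n (i+1) hi1)
  /- (VV3)(iii)  s_i y_j = y_j s_i for j ∉ {i, i+1} -/
  | sy_comm (i j : ℕ) (hi : 1 ≤ i ∧ i ≤ n - 1) (hj : 1 ≤ j ∧ j ≤ n)
      (hij : j ≠ i ∧ j ≠ i + 1) :
      Rel n (fS n i hi * fY n j hj) (fY n j hj * fS n i hi)
  /- (VV4)(i)  e_{i+1} e_i e_{i+1} = -e_{i+1} -/
  | eee_up (i : ℕ) (hi : 1 ≤ i ∧ i ≤ n - 1) (hi1 : 1 ≤ i + 1 ∧ i + 1 ≤ n - 1) :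
      Rel n (fE n (i+1) hi1 * fE n i hi * fE n (i+1) hi1) (-(fE n (i+1) hi1))
  /- (VV4)(ii)  e_i e_{i+1} e_i = -e_i -/
  | eee_down (i : ℕ) (hi : 1 ≤ i ∧ i ≤ n - 1) (hi1 : 1 ≤ i + 1 ∧ i + 1 ≤ n - 1) :
      Rel n (fE n i hi * fE n (i+1) hi1 * fE n i hi) (-(fE n i hi))
  /- (VV5)(i)  e_i s_i = e_i  and  s_i e_i = -e_i -/
  | es (i : ℕ) (hi : 1 ≤ i ∧ i ≤ n - 1) :
      Rel n (fE n i hi * fS n i hi) (fE n i hi)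
  | se (i : ℕ) (hi : 1 ≤ i ∧ i ≤ n - 1) :
      Rel n (fS n i hi * fE n i hi) (-(fE n i hi))
  /- (VV5)(ii)  s_i e_{i+1} e_i = s_{i+1} e_i -/
  | see (i : ℕ) (hi : 1 ≤ i ∧ i ≤ n - 1) (hi1 : 1 ≤ i + 1 ∧ i + 1 ≤ n - 1) :
      Rel n (fS n i hi * fE n (i+1) hi1 * fE n i hi) (fS n (i+1) hi1 * fE n i hi)
  /- (VV5)(iii)  s_{i+1} e_i e_{i+1} = -s_i e_{i+1} -/
  | see' (i : ℕ) (hi : 1 ≤ i ∧ i ≤ n - 1) (hi1 : 1 ≤ i + 1 ∧ i + 1 ≤ n - 1) :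
      Rel n (fS n (i+1) hi1 * fE n i hi * fE n (i+1) hi1) (-(fS n i hi * fE n (i+1) hi1))
  /- (VV5)(iv)  e_{i+1} e_i s_{i+1} = e_{i+1} s_i -/
  | ees (i : ℕ) (hi : 1 ≤ i ∧ i ≤ n - 1) (hi1 : 1 ≤ i + 1 ∧ i + 1 ≤ n - 1) :
      Rel n (fE n (i+1) hi1 * fE n i hi * fS n (i+1) hi1) (fE n (i+1) hi1 * fS n i hi)
  /- (VV5)(v)  e_i e_{i+1} s_i = -e_i s_{i+1} -/
  | ees' (i : ℕ) (hi : 1 ≤ i ∧ i ≤ n - 1) (hi1 : 1 ≤ i + 1 ∧ i + 1 ≤ n - 1) :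
      Rel n (fE n i hi * fE n (i+1) hi1 * fS n i hi) (-(fE n i hi * fS n (i+1) hi1))
  /- (VV6)  e_i² = 0 -/
  | e_sq (i : ℕ) (hi : 1 ≤ i ∧ i ≤ n - 1) :
      Rel n (fE n i hi * fE n i hi) 0
  /- (VV7)(i)  s_i y_i - y_{i+1} s_i = -e_i - 1 -/
  | sy_rel (i : ℕ) (hi : 1 ≤ i ∧ i ≤ n - 1) (hyi : 1 ≤ i ∧ i ≤ n)
      (hyi1 : 1 ≤ i + 1 ∧ i + 1 ≤ n) :
      Rel n (fS n i hi * fY n i hyi - fY n (i+1) hyi1 * fS n i hi) (-(fE n i hi) - 1)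
  /- (VV7)(ii)  y_i s_i - s_i y_{i+1} = e_i - 1 -/
  | ys_rel (i : ℕ) (hi : 1 ≤ i ∧ i ≤ n - 1) (hyi : 1 ≤ i ∧ i ≤ n)
      (hyi1 : 1 ≤ i + 1 ∧ i + 1 ≤ n) :
      Rel n (fY n i hyi * fS n i hi - fS n i hi * fY n (i+1) hyi1) (fE n i hi - 1)
  /- (VV8)(i)  e_i (y_i - y_{i+1}) = -e_i -/
  | e_ydiff (i : ℕ) (hi : 1 ≤ i ∧ i ≤ n - 1) (hyi : 1 ≤ i ∧ i ≤ n)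
      (hyi1 : 1 ≤ i + 1 ∧ i + 1 ≤ n) :
      Rel n (fE n i hi * (fY n i hyi - fY n (i+1) hyi1)) (-(fE n i hi))
  /- (VV8)(ii)  (y_i - y_{i+1}) e_i = e_i -/
  | ydiff_e (i : ℕ) (hi : 1 ≤ i ∧ i ≤ n - 1) (hyi : 1 ≤ i ∧ i ≤ n)
      (hyi1 : 1 ≤ i + 1 ∧ i + 1 ≤ n) :
      Rel n ((fY n i hyi - fY n (i+1) hyi1) * fE n i hi) (fE n i hi)

/-- The degenerate affine periplectic Brauer algebra `sVV n`. -/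
abbrev sVV (n : ℕ) : Type := RingQuot (Rel n)

/-- The generator `s_i` of `sVV n`. -/
def sgen (n i : ℕ) (h : 1 ≤ i ∧ i ≤ n - 1) : sVV n :=
  RingQuot.mkAlgHom ℂ (Rel n) (fS n i h)

/-- The generator `e_i` of `sVV n`. -/
def egen (n i : ℕ) (h : 1 ≤ i ∧ i ≤ n - 1) : sVV n :=
  RingQuot.mkAlgHom ℂ (Rel n) (fE n i h)

/-- The generator `y_j` of `sVV n`. -/
def ygen (n j : ℕ) (h : 1 ≤ j ∧ j ≤ n) : sVV n :=
  RingQuot.mkAlgHom ℂ (Rel n) (fY n j h)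

/-- Total version of `s_i` (equal to `sgen n i _` when `1 ≤ i ≤ n-1`, and `0` otherwise). -/
def ss (n i : ℕ) : sVV n := if h : 1 ≤ i ∧ i ≤ n - 1 then sgen n i h else 0

/-- Total version of `e_i`. -/
def ee (n i : ℕ) : sVV n := if h : 1 ≤ i ∧ i ≤ n - 1 then egen n i h else 0

/-- Total version of `y_j`. -/
def yy (n j : ℕ) : sVV n := if h : 1 ≤ j ∧ j ≤ n then ygen n j h else 0


/-- A calibrated representation of `sVV n` of dimension `d`: a unital `ℂ`-algebra homomorphism
to `d × d` matrices under which every `y_j` acts by a diagonal matrix. -/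
def IsCalibrated {n d : ℕ} (ρ : sVV n →ₐ[ℂ] Matrix (Fin d) (Fin d) ℂ) : Prop :=
  ∀ j : ℕ, 1 ≤ j → j ≤ n → (ρ (yy n j)).IsDiag

/-- Indecomposability of a matrix representation of `sVV n`: there is no direct sum
decomposition `ℂ^d = U ⊕ W` with `U, W` nonzero subspaces invariant under all `ρ a`. -/
def IsIndecomposableRep {n d : ℕ} (ρ : sVV n →ₐ[ℂ] Matrix (Fin d) (Fin d) ℂ) : Prop :=
  ¬ ∃ U W : Submodule ℂ (Fin d → ℂ), U ≠ ⊥ ∧ W ≠ ⊥ ∧ IsCompl U W ∧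
      (∀ a : sVV n, ∀ x ∈ U, (ρ a).mulVec x ∈ U) ∧
      (∀ a : sVV n, ∀ x ∈ W, (ρ a).mulVec x ∈ W)

section DiagonalIntertwiner

open Matrix

variable {R ι : Type*} [CommRing R] [NoZeroDivisors R] [Fintype ι] [DecidableEq ι]
  {S E : Matrix ι ι R} {a b : ι → R}

theorem sub_eq_one_of_diagonal_sub_mul_eq (h : (diagonal a - diagonal b) * E = E) {k m : ι}
    (hE : E k m ≠ 0) : a k - b k = 1 := by
  have hkm := congrFun (congrFun h k) m
  rw [sub_mul, Matrix.sub_apply, diagonal_mul, diagonal_mul, ← sub_mul] at hkm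
  exact mul_right_cancel₀ hE (hkm.trans (one_mul _).symm)

theorem eq_sub_one_or_eq_add_one_of_row_eq_zero (hS : S * S = 1)
    (h : S * diagonal a - diagonal b * S = -E - 1) {k : ι} (hE : ∀ m, E k m = 0)
    (hb : ∀ m, b k ≠ a m) : b k = a k - 1 ∨ b k = a k + 1 := by
  have entry : ∀ m, S k m * (a m - b k) = -(1 : Matrix ι ι R) k m := fun m => by
    have hkm := congrFun (congrFun h k) m
    simp only [Matrix.sub_apply, mul_diagonal, diagonal_mul, Matrix.neg_apply, hE, neg_zero,
      zero_sub] at hkm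
    linear_combination hkm
  have off_diag : ∀ m, m ≠ k → S k m = 0 := fun m hm => by
    have hkm := entry m
    rw [one_apply_ne hm.symm, neg_zero] at hkm
    exact (mul_eq_zero.1 hkm).resolve_right (sub_ne_zero.2 (hb m).symm)
  have sq : S k k * S k k = 1 := by
    have hkk := congrFun (congrFun hS k) k
    rwa [mul_apply, Finset.sum_eq_single k (fun m _ hm => by rw [off_diag m hm, zero_mul])
      (by simp), one_apply_eq] at hkk
  have diag := entry k
  rw [one_apply_eq] at diag
  rcases mul_self_eq_one_iff.1 sq with hs | hs <;> rw [hs] at diag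
  · exact Or.inr (by linear_combination -diag)
  · exact Or.inl (by linear_combination diag)

theorem exists_eq_sub_one_or_eq_or_eq_add_one (hS : S * S = 1)
    (h : S * diagonal a - diagonal b * S = -E - 1) (hE : (diagonal a - diagonal b) * E = E)
    (k : ι) : ∃ m, b k = a m - 1 ∨ b k = a m ∨ b k = a m + 1 := by
  by_cases hrow : ∃ m, E k m ≠ 0
  · obtain ⟨m, hm⟩ := hrow
    have hab := sub_eq_one_of_diagonal_sub_mul_eq hE hm
    exact ⟨k, Or.inl (by linear_combination -hab)⟩
  by_cases hb : ∃ m, b k = a m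
  · obtain ⟨m, hm⟩ := hb
    exact ⟨m, Or.inr (Or.inl hm)⟩
  push Not at hrow hb
  exact ⟨k, (eq_sub_one_or_eq_add_one_of_row_eq_zero hS h hrow hb).imp id Or.inr⟩

end DiagonalIntertwiner

section Relations

variable {n i : ℕ} (hi : 1 ≤ i ∧ i ≤ n - 1) (hyi : 1 ≤ i ∧ i ≤ n) (hyi1 : 1 ≤ i + 1 ∧ i + 1 ≤ n)

theorem sgen_mul_self : sgen n i hi * sgen n i hi = 1 := by
  simpa only [sgen, map_mul, map_one] using RingQuot.mkAlgHom_rel ℂ (Rel.s_sq i hi)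

theorem sgen_mul_ygen_sub_ygen_succ_mul_sgen :
    sgen n i hi * ygen n i hyi - ygen n (i + 1) hyi1 * sgen n i hi = -egen n i hi - 1 := by
  simpa only [sgen, ygen, egen, map_mul, map_sub, map_neg, map_one] using
    RingQuot.mkAlgHom_rel ℂ (Rel.sy_rel i hi hyi hyi1)

theorem ygen_sub_ygen_succ_mul_egen :
    (ygen n i hyi - ygen n (i + 1) hyi1) * egen n i hi = egen n i hi := by
  simpa only [ygen, egen, map_mul, map_sub] using
    RingQuot.mkAlgHom_rel ℂ (Rel.ydiff_e i hi hyi hyi1)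

theorem yy_eq_ygen {j : ℕ} (h : 1 ≤ j ∧ j ≤ n) : yy n j = ygen n j h := dif_pos h

end Relations

theorem exists_yy_succ_apply_eq {n i : ℕ} {ι : Type*} [Fintype ι] [DecidableEq ι]
    (ρ : sVV n →ₐ[ℂ] Matrix ι ι ℂ) (hi : 1 ≤ i) (hin : i + 1 ≤ n)
    (hA : (ρ (yy n i)).IsDiag) (hB : (ρ (yy n (i + 1))).IsDiag) (k : ι) :
    ∃ m, ρ (yy n (i + 1)) k k = ρ (yy n i) m m - 1 ∨ ρ (yy n (i + 1)) k k = ρ (yy n i) m m ∨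
      ρ (yy n (i + 1)) k k = ρ (yy n i) m m + 1 := by
  have hs : 1 ≤ i ∧ i ≤ n - 1 := ⟨hi, by omega⟩
  have hyi : 1 ≤ i ∧ i ≤ n := ⟨hi, by omega⟩
  have hyi1 : 1 ≤ i + 1 ∧ i + 1 ≤ n := ⟨by omega, hin⟩
  rw [yy_eq_ygen hyi] at hA ⊢
  rw [yy_eq_ygen hyi1] at hB ⊢
  refine exists_eq_sub_one_or_eq_or_eq_add_one (S := ρ (sgen n i hs)) (E := ρ (egen n i hs))
    (a := (ρ (ygen n i hyi)).diag) (b := (ρ (ygen n (i + 1) hyi1)).diag) ?_ ?_ ?_ k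
  · rw [← map_mul, sgen_mul_self, map_one]
  · rw [hA.diagonal_diag, hB.diagonal_diag, ← map_mul, ← map_mul, ← map_sub,
      sgen_mul_ygen_sub_ygen_succ_mul_sgen, map_sub, map_neg, map_one]
  · rw [hA.diagonal_diag, hB.diagonal_diag, ← map_sub, ← map_mul,
      ygen_sub_ygen_succ_mul_egen]

theorem integer_eigenvalues_general (n d : ℕ)
    (ρ : sVV n →ₐ[ℂ] Matrix (Fin d) (Fin d) ℂ) (hcal : IsCalibrated ρ)
    (h1 : ∀ ℓ : Fin d, ∃ m : ℤ, ρ (yy n 1) ℓ ℓ = (m : ℂ)) :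
    ∀ j : ℕ, 1 ≤ j → j ≤ n → ∀ ℓ : Fin d, ∃ m : ℤ, ρ (yy n j) ℓ ℓ = (m : ℂ) := by
  intro j hj hjn
  induction j, hj using Nat.le_induction with
  | base => exact h1
  | succ i hi ih =>
    intro ℓ
    obtain ⟨m, hm⟩ := exists_yy_succ_apply_eq ρ hi hjn (hcal i hi (by omega))
      (hcal (i + 1) (by omega) hjn) ℓ
    obtain ⟨z, hz⟩ := ih (by omega) m
    rcases hm with h | h | h
    · exact ⟨z - 1, by rw [h, hz]; push_cast; ring⟩
    · exact ⟨z, by rw [h, hz]⟩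
    · exact ⟨z + 1, by rw [h, hz]; push_cast; ring⟩

/-- In a calibrated representation of `sVV n`, if all eigenvalues of `y_1`
(i.e. all diagonal entries of `ρ(y_1)`) are integers, then so are those of every `y_j`. -/
theorem integer_eigenvalues (n d : ℕ) (hn : 2 ≤ n) (hd : 1 ≤ d)
    (ρ : sVV n →ₐ[ℂ] Matrix (Fin d) (Fin d) ℂ) (hcal : IsCalibrated ρ)
    (h1 : ∀ ℓ : Fin d, ∃ m : ℤ, ρ (yy n 1) ℓ ℓ = (m : ℂ)) :
    ∀ j : ℕ, 1 ≤ j → j ≤ n → ∀ ℓ : Fin d, ∃ m : ℤ, ρ (yy n j) ℓ ℓ = (m : ℂ) :=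
  integer_eigenvalues_general n d ρ hcal h1

end Periplectic
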